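/- Fix a real constant α and a real constant b > 0. The function G(w, w̄, v) := e^{v sin α} · (w w̄)/b + 4 e^{−v sin α} · b/(1 + 3 sin²α) satisfies equation (alterform) at every point of ℂ × ℝ. -/

import Mathlib

/-!
Along the ansatz `G = p e^{sv} |w|² + q e^{-sv}` every derivative occurring in (alterform) stays
of the same shape: `∂_v` maps the pair `(p, q)` to `(s p, -s q)`, while `G_w = p e^{sv} w̄`,
`G_{w̄} = p e^{sv} w` and `G_{ww̄} = p e^{sv}`. With `s = sin α`, and since
`e^{iα} - i sin α = cos α`, the left-hand side collapses to
`p e^{sv} (p e^{sv} |w|² cos² α + q e^{-sv} (1 + 3 sin² α)) - p² e^{2sv} |w|² cos² α = p q (1 + 3 sin² α)`,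
which equals `4` for `p = 1/b`, `q = 4b / (1 + 3 sin² α)`.
-/

noncomputable section

/-- Wirtinger derivative ∂_w of a complex-valued function of (w, v) ∈ ℂ × ℝ. -/
def dw (G : ℂ → ℝ → ℂ) : ℂ → ℝ → ℂ := fun w v =>
  ((fderiv ℝ (fun z => G z v) w 1) - Complex.I * (fderiv ℝ (fun z => G z v) w Complex.I)) / 2

/-- Wirtinger derivative ∂_{w̄} of a complex-valued function of (w, v) ∈ ℂ × ℝ. -/
def dwb (G : ℂ → ℝ → ℂ) : ℂ → ℝ → ℂ := fun w v =>
  ((fderiv ℝ (fun z => G z v) w 1) + Complex.I * (fderiv ℝ (fun z => G z v) w Complex.I)) / 2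

/-- Partial derivative ∂_v of a complex-valued function of (w, v) ∈ ℂ × ℝ. -/
def dv (G : ℂ → ℝ → ℂ) : ℂ → ℝ → ℂ := fun w v => deriv (fun t => G w t) v

/-- A real-valued function of (w, v), viewed as complex-valued. -/
def cx (G : ℂ → ℝ → ℝ) : ℂ → ℝ → ℂ := fun w v => (G w v : ℂ)

/-- Equation (alterform) at the point (w, v):
(G + G_{vv} − 2 G_v sin α) G_{ww̄}
  − (e^{iα} G_{w̄} − i G_{vw̄})(e^{−iα} G_w + i G_{vw}) = 4. -/
def Alterform (α : ℝ) (G : ℂ → ℝ → ℝ) (w : ℂ) (v : ℝ) : Prop :=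
  (cx G w v + dv (dv (cx G)) w v - 2 * dv (cx G) w v * (Real.sin α : ℂ))
      * dwb (dw (cx G)) w v
    - (Complex.exp (Complex.I * (α : ℂ)) * dwb (cx G) w v
        - Complex.I * dwb (dv (cx G)) w v)
      * (Complex.exp (-(Complex.I * (α : ℂ))) * dw (cx G) w v
        + Complex.I * dw (dv (cx G)) w v)
    = 4

open Complex ComplexConjugate

section Wirtinger

variable {G : ℂ → ℝ → ℂ} {w : ℂ} {v : ℝ} {a b : ℂ}

abbrev wirtingerCLM (a b : ℂ) : ℂ →L[ℝ] ℂ :=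
  a • ContinuousLinearMap.id ℝ ℂ + b • conjCLE.toContinuousLinearMap

lemma dw_eq_of_hasFDerivAt (h : HasFDerivAt (fun z => G z v) (wirtingerCLM a b) w) :
    dw G w v = a := by
  simp only [dw, h.fderiv, add_apply, smul_apply,
    ContinuousLinearMap.id_apply, ContinuousLinearEquiv.coe_coe, conjCLE_apply, map_one,
    conj_I, smul_eq_mul]
  linear_combination (b - a) / 2 * I_sq

lemma dwb_eq_of_hasFDerivAt (h : HasFDerivAt (fun z => G z v) (wirtingerCLM a b) w) :
    dwb G w v = b := by
  simp only [dwb, h.fderiv, add_apply, smul_apply,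
    ContinuousLinearMap.id_apply, ContinuousLinearEquiv.coe_coe, conjCLE_apply, map_one,
    conj_I, smul_eq_mul]
  linear_combination (a - b) / 2 * I_sq

lemma hasFDerivAt_const_mul_conj (c : ℂ) (w : ℂ) :
    HasFDerivAt (fun z : ℂ => c * conj z) (wirtingerCLM 0 c) w :=
  (conjCLE.toContinuousLinearMap.hasFDerivAt.const_mul c).congr_fderiv (by ext; simp)

lemma hasFDerivAt_const_mul_mul_conj_add (c d : ℂ) (w : ℂ) :
    HasFDerivAt (fun z : ℂ => c * (z * conj z) + d) (wirtingerCLM (c * conj w) (c * w)) w :=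
  ((((hasFDerivAt_id w).mul' conjCLE.toContinuousLinearMap.hasFDerivAt).const_mul c).add_const
    d).congr_fderiv (by ext; simp; ring)

end Wirtinger

def expAnsatz (s p q : ℝ) : ℂ → ℝ → ℝ := fun z t =>
  p * Real.exp (t * s) * normSq z + q * Real.exp (-(t * s))

section expAnsatz

variable (s p q : ℝ) (w : ℂ) (v : ℝ)

lemma cx_expAnsatz_apply :
    cx (expAnsatz s p q) w v
      = (p * Real.exp (v * s) : ℝ) * (w * conj w) + (q * Real.exp (-(v * s)) : ℝ) := by
  simp only [cx, expAnsatz, mul_conj]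
  push_cast
  ring

lemma dv_expAnsatz : dv (cx (expAnsatz s p q)) = cx (expAnsatz s (s * p) (-(s * q))) := by
  funext w v
  have hexp : HasDerivAt (fun t : ℝ => Real.exp (t * s)) (Real.exp (v * s) * s) v := by
    simpa using ((hasDerivAt_id v).mul_const s).exp
  have hexp_neg : HasDerivAt (fun t : ℝ => Real.exp (-(t * s))) (Real.exp (-(v * s)) * -s) v := by
    simpa using ((hasDerivAt_id v).mul_const s).neg.exp
  have h : HasDerivAt (fun t : ℝ => ((p * Real.exp (t * s) * normSq w + q * Real.exp (-(t * s)) : ℝ) : ℂ))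
      ((p * (Real.exp (v * s) * s) * normSq w + q * (Real.exp (-(v * s)) * -s) : ℝ)) v :=
    (((hexp.const_mul p).mul_const (normSq w)).add (hexp_neg.const_mul q)).ofReal_comp
  simp only [dv, cx, expAnsatz]
  rw [h.deriv]
  congr 1
  ring

lemma dw_expAnsatz : dw (cx (expAnsatz s p q)) w v = (p * Real.exp (v * s) : ℝ) * conj w :=
  dw_eq_of_hasFDerivAt <| by
    simpa only [cx_expAnsatz_apply] using hasFDerivAt_const_mul_mul_conj_add _ _ w

lemma dwb_expAnsatz : dwb (cx (expAnsatz s p q)) w v = (p * Real.exp (v * s) : ℝ) * w :=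
  dwb_eq_of_hasFDerivAt <| by
    simpa only [cx_expAnsatz_apply] using hasFDerivAt_const_mul_mul_conj_add _ _ w

lemma dwb_dw_expAnsatz : dwb (dw (cx (expAnsatz s p q))) w v = (p * Real.exp (v * s) : ℝ) :=
  dwb_eq_of_hasFDerivAt <| by
    simpa only [dw_expAnsatz] using hasFDerivAt_const_mul_conj _ w

end expAnsatz

lemma alterform_expAnsatz_iff (α p q : ℝ) (w : ℂ) (v : ℝ) :
    Alterform α (expAnsatz (Real.sin α) p q) w v ↔ p * q * (1 + 3 * Real.sin α ^ 2) = 4 := by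
  have hexp : Complex.exp (I * α) = cos α + sin α * I := by rw [mul_comm, exp_mul_I]
  have hexp_neg : Complex.exp (-(I * α)) = cos α - sin α * I := by
    rw [← mul_neg, mul_comm, exp_mul_I, cos_neg, sin_neg, neg_mul, ← sub_eq_add_neg]
  have hE : Complex.exp (v * sin α) * Complex.exp (-(v * sin α)) = 1 := by
    rw [← Complex.exp_add, add_neg_cancel, exp_zero]
  unfold Alterform
  rw [dv_expAnsatz, dv_expAnsatz, dw_expAnsatz, dw_expAnsatz, dwb_expAnsatz, dwb_expAnsatz,
    dwb_dw_expAnsatz, cx_expAnsatz_apply, cx_expAnsatz_apply, cx_expAnsatz_apply,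
    ← ofReal_inj, ofReal_ofNat]
  refine Eq.congr_left ?_
  push_cast
  rw [hexp, hexp_neg]
  linear_combination (p * q * (1 + 3 * sin α ^ 2)) * hE
    - (p * Complex.exp (v * sin α)) ^ 2 * (w * conj w) * sin_sq_add_cos_sq (α : ℂ)

theorem alterform_explicit_solution (α : ℝ) (b : ℝ) (hb : 0 < b) :
    ∀ w : ℂ, ∀ v : ℝ, Alterform α
      (fun z t => Real.exp (t * Real.sin α) * Complex.normSq z / b
        + 4 * Real.exp (-(t * Real.sin α)) * b / (1 + 3 * Real.sin α ^ 2)) w v := by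
  intro w v
  have hG : (fun z t => Real.exp (t * Real.sin α) * Complex.normSq z / b
        + 4 * Real.exp (-(t * Real.sin α)) * b / (1 + 3 * Real.sin α ^ 2))
      = expAnsatz (Real.sin α) b⁻¹ (4 * b / (1 + 3 * Real.sin α ^ 2)) := by
    funext z t
    simp only [expAnsatz]
    ring
  rw [hG, alterform_expAnsatz_iff]
  field_simp

end
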